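/- arXiv:2201.00508 — 3 statements merged into one kernel-verified Lean document; each statement's English description precedes it below -/
import Mathlib

section
/- For a discrete random variable U taking equiprobable values u_1,...,u_n and p ∈ [0,1), the superquantile satisfies S_p(U) = max over q in Δ_p of qᵀu, where Δ_p = { q ∈ ℝ^n : q_i ≥ 0, Σ q_i = 1, q_i ≤ 1/(n(1-p)) }. That is, S_p is the support function of the polytope Δ_p. -/
open Finset

/-- Empirical `p`-quantile of the vector `u` of `n` equiprobable values:
the smallest `t` with `(1/n)·#{i : u i ≤ t} ≥ p`. -/
noncomputable def empQuantile (n : ℕ) (u : Fin n → ℝ) (p : ℝ) : ℝ :=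
  sInf {t : ℝ | p ≤ ((univ.filter fun i => u i ≤ t).card : ℝ) / n}

/-- Empirical superquantile `S_p(u) = (1/(1-p)) ∫_p^1 Q_{p'}(u) dp'`. -/
noncomputable def empSuperquantile (n : ℕ) (u : Fin n → ℝ) (p : ℝ) : ℝ :=
  (1 / (1 - p)) * ∫ p' in p..1, empQuantile n u p'

lemma integral_piece (f : ℝ → ℝ) {a b c : ℝ} (hab : a ≤ b)
    (h : ∀ x ∈ Set.Ioc a b, f x = c) :
    IntervalIntegrable f MeasureTheory.volume a b ∧ (∫ x in a..b, f x) = (b - a) * c := by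
  have hae : f =ᵐ[MeasureTheory.volume.restrict (Set.Ioc a b)] fun _ => c :=
    (MeasureTheory.ae_restrict_mem measurableSet_Ioc).mono fun x hx => h x hx
  have hint : MeasureTheory.IntegrableOn f (Set.Ioc a b) :=
    (MeasureTheory.integrableOn_const measure_Ioc_lt_top.ne).congr hae.symm
  refine ⟨(intervalIntegrable_iff_integrableOn_Ioc_of_le hab).2 hint, ?_⟩
  rw [intervalIntegral.integral_of_le hab, MeasureTheory.integral_congr_ae hae,
    MeasureTheory.setIntegral_const]
  simp [Real.volume_Ioc, ENNReal.toReal_ofReal (sub_nonneg.2 hab), hab]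

lemma aux_quantile (n : ℕ) (u : Fin n → ℝ) (k : ℕ) (hk : k < n) (p' : ℝ)
    (h1 : (k : ℝ) / n < p') (h2 : p' ≤ ((k : ℝ) + 1) / n) :
    empQuantile n u p' = (u ∘ ⇑(Tuple.sort u)) ⟨k, hk⟩ := by
  have hn0 : 0 < n := lt_of_le_of_lt (Nat.zero_le k) hk
  have hn' : (0:ℝ) < n := by exact_mod_cast hn0
  set σ := Tuple.sort u
  set v : Fin n → ℝ := u ∘ ⇑σ with hvdef
  have hv : Monotone v := Tuple.monotone_sort u
  have hcard : ∀ t : ℝ, (univ.filter fun i => v i ≤ t).card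
      = (univ.filter fun i => u i ≤ t).card := by
    intro t
    apply Finset.card_bij (fun i _ => σ i)
    · intro a ha; simp only [mem_filter, mem_univ, true_and] at ha ⊢; exact ha
    · intro a _ b _ hab; exact σ.injective hab
    · intro b hb
      refine ⟨σ.symm b, ?_, by simp⟩
      simp only [mem_filter, mem_univ, true_and, hvdef, Function.comp_apply,
        Equiv.apply_symm_apply] at hb ⊢
      exact hb
  have hset : {t : ℝ | p' ≤ ((univ.filter fun i => u i ≤ t).card : ℝ) / n}
      = Set.Ici (v ⟨k, hk⟩) := by
    ext t
    simp only [Set.mem_setOf_eq, Set.mem_Ici, ← hcard t]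
    constructor
    · intro h
      by_contra hlt
      push_neg at hlt
      have hsub : (univ.filter fun i => v i ≤ t) ⊆ Iio (⟨k, hk⟩ : Fin n) := by
        intro i hi
        simp only [mem_filter, mem_univ, true_and] at hi
        simp only [mem_Iio]
        by_contra hge
        push_neg at hge
        have := hv hge
        linarith
      have hc := Finset.card_le_card hsub
      rw [Fin.card_Iio] at hc
      have hc' : ((univ.filter fun i => v i ≤ t).card : ℝ) ≤ (k : ℝ) := by exact_mod_cast hc
      have : ((univ.filter fun i => v i ≤ t).card : ℝ) / n ≤ (k : ℝ) / n := by gcongr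
      linarith
    · intro h
      have hsub : Iic (⟨k, hk⟩ : Fin n) ⊆ (univ.filter fun i => v i ≤ t) := by
        intro i hi
        simp only [mem_Iic] at hi
        simp only [mem_filter, mem_univ, true_and]
        exact le_trans (hv hi) h
      have hc := Finset.card_le_card hsub
      rw [Fin.card_Iic] at hc
      have hc' : ((k : ℝ) + 1) ≤ ((univ.filter fun i => v i ≤ t).card : ℝ) := by exact_mod_cast hc
      have : ((k : ℝ) + 1) / n ≤ ((univ.filter fun i => v i ≤ t).card : ℝ) / n := by gcongr
      linarith
  rw [empQuantile, hset, csInf_Ici]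


/-- the superquantile of a discrete random variable with `n` equiprobable
values `u` is the maximum of `qᵀu` over the truncated simplex
`Δ_p = { q : q i ≥ 0, ∑ q i = 1, q i ≤ 1/(n(1-p)) }`, i.e. the support function of `Δ_p`. -/
theorem empSuperquantile_isGreatest_dual (n : ℕ) (hn : 0 < n) (u : Fin n → ℝ)
    (p : ℝ) (hp : p ∈ Set.Ico (0 : ℝ) 1) :
    IsGreatest {z : ℝ | ∃ q : Fin n → ℝ, (∀ i, 0 ≤ q i) ∧ (∑ i, q i) = 1 ∧
        (∀ i, q i ≤ 1 / (n * (1 - p))) ∧ z = ∑ i, q i * u i}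
      (empSuperquantile n u p) := by
  obtain ⟨hp0, hp1⟩ := hp
  have hn' : (0:ℝ) < n := by exact_mod_cast hn
  have h1p : (0:ℝ) < 1 - p := by linarith
  set σ := Tuple.sort u with hσ
  set v : Fin n → ℝ := u ∘ ⇑σ with hvdef
  have hv : Monotone v := Tuple.monotone_sort u
  set k₀ : ℕ := ⌊(n:ℝ) * p⌋₊ with hk₀def
  have hk₀le : (k₀:ℝ) ≤ n * p := Nat.floor_le (by positivity)
  have hk₀lt : (n:ℝ) * p < k₀ + 1 := Nat.lt_floor_add_one _
  have hk₀n : k₀ < n := by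
    have : (k₀:ℝ) < n := by nlinarith
    exact_mod_cast this
  set w : ℕ → ℝ := fun k => if h : k < n then v ⟨k, h⟩ else 0 with hwdef
  have hwv : ∀ j : Fin n, w (j:ℕ) = v j := by
    intro j; simp [hwdef, j.isLt]
  have hwmono : ∀ j k : ℕ, j ≤ k → k < n → w j ≤ w k := by
    intro j k hjk hkn
    have hjn : j < n := lt_of_le_of_lt hjk hkn
    simp only [hwdef, dif_pos hjn, dif_pos hkn]
    exact hv (show (⟨j, hjn⟩ : Fin n) ≤ ⟨k, hkn⟩ from hjk)
  set M : ℕ := n - (k₀ + 1) with hMdef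
  have hMcast : (M:ℝ) = (n:ℝ) - ((k₀:ℝ) + 1) := by
    rw [hMdef, Nat.cast_sub (by omega : k₀ + 1 ≤ n)]; push_cast; ring
  -- quantile on pieces
  have hq : ∀ k, ∀ hk : k < n, ∀ p' ∈ Set.Ioc ((k:ℝ)/n) (((k:ℝ)+1)/n),
      empQuantile n u p' = w k := by
    intro k hk p' hp'
    rw [aux_quantile n u k hk p' hp'.1 hp'.2]
    simp [hwdef, dif_pos hk, hvdef, hσ]
  have hple : p ≤ ((k₀:ℝ)+1)/n := le_of_lt ((lt_div_iff₀ hn').2 (by linarith))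
  have hk₀np : (k₀:ℝ)/n ≤ p := (div_le_iff₀ hn').2 (by linarith)
  -- adjacent intervals
  set a : ℕ → ℝ := fun i => ((k₀:ℝ) + 1 + i) / n with hadef
  set b : ℕ → ℝ := fun i => if i = 0 then p else a (i - 1) with hbdef
  have haM : a M = 1 := by
    simp only [hadef]
    rw [show ((k₀:ℝ) + 1 + M) = (n:ℝ) by rw [hMcast]; ring]
    field_simp
  have hpiece : ∀ i < M, IntervalIntegrable (empQuantile n u) MeasureTheory.volume (a i) (a (i+1))
      ∧ (∫ x in a i..a (i+1), empQuantile n u x) = (1/(n:ℝ)) * w (k₀+1+i) := by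
    intro i hi
    have hkn : k₀ + 1 + i < n := by omega
    have hle : a i ≤ a (i+1) := by
      simp only [hadef]
      gcongr <;> omega
    have e1 : ((k₀+1+i : ℕ):ℝ) = (k₀:ℝ) + 1 + (i:ℝ) := by push_cast; ring
    have e2 : a (i+1) = ((k₀:ℝ) + 1 + (i:ℝ) + 1)/n := by
      simp only [hadef]; push_cast; ring
    have heq : ∀ x ∈ Set.Ioc (a i) (a (i+1)), empQuantile n u x = w (k₀+1+i) := by
      intro x hx
      apply hq (k₀+1+i) hkn
      constructor
      · rw [e1]; exact hx.1
      · rw [e1, ← e2]; exact hx.2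
    obtain ⟨hint, hval⟩ := integral_piece (empQuantile n u) hle heq
    refine ⟨hint, ?_⟩
    rw [hval]
    have : a (i+1) - a i = 1/(n:ℝ) := by simp only [hadef]; push_cast; field_simp <;> ring
    rw [this]
  have hfirst : IntervalIntegrable (empQuantile n u) MeasureTheory.volume p (a 0)
      ∧ (∫ x in p..a 0, empQuantile n u x) = (((k₀:ℝ)+1)/n - p) * w k₀ := by
    have ha0 : a 0 = ((k₀:ℝ)+1)/n := by simp [hadef]
    rw [ha0]
    apply integral_piece (empQuantile n u) hple
    intro x hx
    exact hq k₀ hk₀n x ⟨lt_of_le_of_lt hk₀np hx.1, hx.2⟩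
  have hib : ∀ i < M + 1, IntervalIntegrable (empQuantile n u) MeasureTheory.volume (b i) (b (i+1)) := by
    intro i hi
    cases i with
    | zero => simpa [hbdef] using hfirst.1
    | succ j =>
      have : b (j+1) = a j ∧ b (j+2) = a (j+1) := by simp [hbdef]
      rw [this.1, this.2]
      exact (hpiece j (by omega)).1
  have hsumint := intervalIntegral.sum_integral_adjacent_intervals
    (μ := MeasureTheory.volume) (a := b) (n := M + 1) hib
  have hb0 : b 0 = p := by simp [hbdef]
  have hbM : b (M+1) = 1 := by simp [hbdef, haM]
  have KEY : (∫ x in p..1, empQuantile n u x)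
      = (((k₀:ℝ)+1)/n - p) * w k₀ + ∑ i ∈ range M, (1/(n:ℝ)) * w (k₀+1+i) := by
    have hrw : (∫ x in p..1, empQuantile n u x)
        = ∫ x in (b 0)..(b (M+1)), empQuantile n u x := by rw [hb0, hbM]
    rw [hrw, ← hsumint, Finset.sum_range_succ']
    have h0 : (∫ x in (b 0)..(b 1), empQuantile n u x) = (((k₀:ℝ)+1)/n - p) * w k₀ := by
      have : b 0 = p ∧ b 1 = a 0 := by simp [hbdef]
      rw [this.1, this.2]; exact hfirst.2
    rw [h0, add_comm]
    congr 1
    apply Finset.sum_congr rfl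
    intro i hi
    have : b (i+1) = a i ∧ b (i+1+1) = a (i+1) := by simp [hbdef]
    rw [this.1, this.2]
    exact (hpiece i (mem_range.mp hi)).2
  set c : ℝ := w k₀ with hcdef
  set qs₀ : ℝ := (((k₀:ℝ)+1)/n - p)/(1-p) with hqs₀def
  set m : ℝ := 1/((n:ℝ)*(1-p)) with hmdef
  set T : ℝ := ∑ i ∈ range M, w (k₀+1+i) with hTdef
  have hS : empSuperquantile n u p = qs₀ * c + m * T := by
    rw [empSuperquantile, KEY, ← Finset.mul_sum, ← hTdef, hqs₀def, hmdef]
    have h1 : (1:ℝ) - p ≠ 0 := h1p.ne'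
    have h2 : (n:ℝ) ≠ 0 := hn'.ne'
    field_simp
  have hqs_sum : qs₀ + M * m = 1 := by
    rw [hqs₀def, hmdef, hMcast]
    have h1 : (1:ℝ) - p ≠ 0 := h1p.ne'
    have h2 : (n:ℝ) ≠ 0 := hn'.ne'
    field_simp
    ring
  have hqs0 : 0 ≤ qs₀ := by
    apply div_nonneg _ h1p.le
    have : p < ((k₀:ℝ)+1)/n := (lt_div_iff₀ hn').2 (by linarith)
    linarith
  have hm0 : 0 ≤ m := by rw [hmdef]; positivity
  have hqs₀m : qs₀ ≤ m := by
    have h₂ : ((k₀:ℝ)+1)/n - p ≤ 1/n := by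
      have : ((k₀:ℝ)+1)/n = 1/n + (k₀:ℝ)/n := by ring
      linarith
    rw [hqs₀def, hmdef, show (1:ℝ)/((n:ℝ)*(1-p)) = (1/n)/(1-p) by field_simp]
    gcongr
  set qs : ℕ → ℝ := fun k => if k < k₀ then 0 else if k = k₀ then qs₀ else m with hqsdef
  have hqs_nonneg : ∀ k, 0 ≤ qs k := by
    intro k
    simp only [hqsdef]
    split
    · exact le_rfl
    · split
      · exact hqs0
      · exact hm0
  have hqs_le : ∀ k, qs k ≤ m := by
    intro k
    simp only [hqsdef]
    split
    · exact hm0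
    · split
      · exact hqs₀m
      · exact le_refl m
  have hsplit : ∀ f : ℕ → ℝ, ∑ k ∈ range n, f k
      = ∑ k ∈ range k₀, f k + f k₀ + ∑ i ∈ range M, f (k₀+1+i) := by
    intro f
    rw [← Finset.sum_range_add_sum_Ico f (by omega : k₀ + 1 ≤ n),
      Finset.sum_range_succ, Finset.sum_Ico_eq_sum_range]
  have hqs_sum_range : ∑ k ∈ range n, qs k = qs₀ + M * m := by
    rw [hsplit]
    have h1 : ∑ k ∈ range k₀, qs k = 0 :=
      Finset.sum_eq_zero fun k hk => by simp [hqsdef, mem_range.mp hk]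
    have h2 : qs k₀ = qs₀ := by simp [hqsdef]
    have h3 : ∑ i ∈ range M, qs (k₀+1+i) = M * m := by
      rw [Finset.sum_congr rfl (fun i _ => show qs (k₀+1+i) = m by
        simp only [hqsdef]; rw [if_neg (by omega), if_neg (by omega)]),
        Finset.sum_const, nsmul_eq_mul, Finset.card_range]
    rw [h1, h2, h3]; ring
  have hqsw_sum : ∑ k ∈ range n, qs k * w k = qs₀ * c + m * T := by
    rw [hsplit]
    have h1 : ∑ k ∈ range k₀, qs k * w k = 0 :=
      Finset.sum_eq_zero fun k hk => by simp [hqsdef, mem_range.mp hk]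
    have h2 : qs k₀ * w k₀ = qs₀ * c := by simp [hqsdef, hcdef]
    have h3 : ∑ i ∈ range M, qs (k₀+1+i) * w (k₀+1+i) = m * T := by
      rw [hTdef, Finset.mul_sum]
      apply Finset.sum_congr rfl
      intro i _
      have : qs (k₀+1+i) = m := by
        simp only [hqsdef]; rw [if_neg (by omega), if_neg (by omega)]
      rw [this]
    rw [h1, h2, h3]; ring
  constructor
  · -- membership
    refine ⟨fun i => qs ((σ.symm i : Fin n) : ℕ), fun i => hqs_nonneg _, ?_, fun i => hqs_le _, ?_⟩
    · rw [Equiv.sum_comp σ.symm (fun j : Fin n => qs (j : ℕ)),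
        Fin.sum_univ_eq_sum_range (fun k => qs k) n, hqs_sum_range, hqs_sum]
    · rw [hS]
      have := Equiv.sum_comp σ (fun i : Fin n => qs ((σ.symm i : Fin n) : ℕ) * u i)
      rw [← this]
      have heach : ∀ j : Fin n, qs ((σ.symm (σ j) : Fin n) : ℕ) * u (σ j) = qs (j:ℕ) * w (j:ℕ) := by
        intro j
        rw [Equiv.symm_apply_apply, hwv j, hvdef]
        rfl
      rw [Finset.sum_congr rfl fun j _ => heach j,
        Fin.sum_univ_eq_sum_range (fun k => qs k * w k) n, hqsw_sum]
  · -- upper bound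
    rintro z ⟨q, hq0, hq1, hqm, hz⟩
    rw [hz, hS]
    have step1 : ∑ i, q i * u i ≤ ∑ i, q i * (c + max (u i - c) 0) := by
      apply Finset.sum_le_sum
      intro i _
      apply mul_le_mul_of_nonneg_left _ (hq0 i)
      rcases le_total (u i) c with h | h
      · have : max (u i - c) 0 = 0 := max_eq_right (by linarith)
        linarith
      · have : max (u i - c) 0 = u i - c := max_eq_left (by linarith)
        linarith
    have step2 : ∑ i, q i * (c + max (u i - c) 0) = c + ∑ i, q i * max (u i - c) 0 := by
      simp only [mul_add, Finset.sum_add_distrib, ← Finset.sum_mul, hq1]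
      ring
    have step3 : ∑ i, q i * max (u i - c) 0 ≤ ∑ i, m * max (u i - c) 0 := by
      apply Finset.sum_le_sum
      intro i _
      exact mul_le_mul_of_nonneg_right (hqm i) (le_max_right _ _)
    have hmaxsum : ∑ i, max (u i - c) 0 = T - M * c := by
      have := Equiv.sum_comp σ (fun i : Fin n => max (u i - c) 0)
      rw [← this]
      have heach : ∀ j : Fin n, max (u (σ j) - c) 0 = max (w (j:ℕ) - c) 0 := by
        intro j; rw [hwv j]; rfl
      rw [Finset.sum_congr rfl fun j _ => heach j,
        Fin.sum_univ_eq_sum_range (fun k => max (w k - c) 0) n, hsplit]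
      have h1 : ∑ k ∈ range k₀, max (w k - c) 0 = 0 := by
        apply Finset.sum_eq_zero
        intro k hk
        have : w k ≤ c := hwmono k k₀ (le_of_lt (mem_range.mp hk)) hk₀n
        exact max_eq_right (by linarith)
      have h2 : max (w k₀ - c) 0 = 0 := by rw [hcdef]; simp
      have h3 : ∑ i ∈ range M, max (w (k₀+1+i) - c) 0 = T - M * c := by
        have : ∀ i ∈ range M, max (w (k₀+1+i) - c) 0 = w (k₀+1+i) - c := by
          intro i hi
          have : c ≤ w (k₀+1+i) := hwmono k₀ (k₀+1+i) (by omega) (by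
            have := mem_range.mp hi; omega)
          exact max_eq_left (by linarith)
        rw [Finset.sum_congr rfl this, Finset.sum_sub_distrib, Finset.sum_const,
          nsmul_eq_mul, Finset.card_range, ← hTdef]
      rw [h1, h2, h3]; ring
    have : ∑ i, q i * u i ≤ c + m * (T - M * c) := by
      calc ∑ i, q i * u i ≤ c + ∑ i, q i * max (u i - c) 0 := by rw [← step2]; exact step1
        _ ≤ c + ∑ i, m * max (u i - c) 0 := by linarith
        _ = c + m * ∑ i, max (u i - c) 0 := by rw [Finset.mul_sum]
        _ = c + m * (T - M * c) := by rw [hmaxsum]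
    have hqs₀eq : qs₀ = 1 - M * m := by linarith
    calc ∑ i, q i * u i ≤ c + m * (T - M * c) := this
      _ = qs₀ * c + m * T := by rw [hqs₀eq]; ring
end

section
/- Let ρ : ℝ → ℝ₊ be a continuous probability density with finite first absolute moment, and define the convolution smoothing m̄₁(η) = ∫_{−∞}^{η} (η − s) ρ(s) ds of max{·,0}. Then m̄₁ is convex, differentiable with m̄₁'(η) = ∫_{−∞}^{η} ρ(s) ds (the CDF of ρ), and its convex conjugate m̄₁* equals d̄ + indicator of [0,1], where d̄(t) = t·Q_t(ρ) − m̄₁(Q_t(ρ)) and Q_t(ρ) is the quantile function of ρ. Consequently m̄₁(η) = max_{0 ≤ t ≤ 1} { η t − d̄(t) }. -/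
open MeasureTheory

/-- Convolution smoothing of `max{·,0}` with density `ρ` (parameter `ν = 1`):
`m̄₁(η) = ∫_{−∞}^η (η − s) ρ(s) ds`. -/
noncomputable def convSmooth (ρ : ℝ → ℝ) (η : ℝ) : ℝ :=
  ∫ s in Set.Iic η, (η - s) * ρ s

open Set

section Aux

variable {ρ : ℝ → ℝ}

lemma rho_integrable (hρint : ∫ s, ρ s = 1) : Integrable ρ := by
  by_contra h
  rw [integral_undef h] at hρint
  norm_num at hρint

lemma srho_integrable (hρcont : Continuous ρ) (hρpos : ∀ s, 0 ≤ ρ s)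
    (hρmom : Integrable fun s => |s| * ρ s) : Integrable (fun s => s * ρ s) := by
  refine hρmom.mono ((continuous_id.mul hρcont).aestronglyMeasurable) ?_
  filter_upwards with s
  simp [abs_mul, abs_of_nonneg (hρpos s)]

/-- `F x = x * G x - H x`. -/
lemma convSmooth_eq (hρcont : Continuous ρ) (hρpos : ∀ s, 0 ≤ ρ s) (hρint : ∫ s, ρ s = 1)
    (hρmom : Integrable fun s => |s| * ρ s) (x : ℝ) :
    convSmooth ρ x = x * (∫ s in Iic x, ρ s) - ∫ s in Iic x, s * ρ s := by
  have hIρ := rho_integrable hρint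
  have hIsρ := srho_integrable hρcont hρpos hρmom
  unfold convSmooth
  have h : ∀ s : ℝ, (x - s) * ρ s = x * ρ s - s * ρ s := fun s => by ring
  simp_rw [h]
  rw [integral_sub ((hIρ.integrableOn).const_mul x) hIsρ.integrableOn, integral_const_mul]

/-- The key identity. -/
lemma key_identity (hρcont : Continuous ρ) (hρpos : ∀ s, 0 ≤ ρ s) (hρint : ∫ s, ρ s = 1)
    (hρmom : Integrable fun s => |s| * ρ s) (x y : ℝ) :
    convSmooth ρ x - (x * (∫ s in Iic y, ρ s) - (y * (∫ s in Iic y, ρ s) - convSmooth ρ y))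
      = ∫ s in x..y, (s - x) * ρ s := by
  have hIρ := rho_integrable hρint
  have hIsρ := srho_integrable hρcont hρpos hρmom
  have hG : (∫ s in Iic y, ρ s) - (∫ s in Iic x, ρ s) = ∫ s in x..y, ρ s :=
    intervalIntegral.integral_Iic_sub_Iic hIρ.integrableOn hIρ.integrableOn
  have hH : (∫ s in Iic y, s * ρ s) - (∫ s in Iic x, s * ρ s) = ∫ s in x..y, s * ρ s :=
    intervalIntegral.integral_Iic_sub_Iic hIsρ.integrableOn hIsρ.integrableOn
  have hc : Continuous fun s : ℝ => s * ρ s := continuous_id.mul hρcont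
  have hR : ∫ s in x..y, (s - x) * ρ s
      = (∫ s in x..y, s * ρ s) - x * ∫ s in x..y, ρ s := by
    have hsub : ∫ s in x..y, (s - x) * ρ s = ∫ s in x..y, (s * ρ s - x * ρ s) :=
      intervalIntegral.integral_congr fun s _ => by ring
    rw [hsub, intervalIntegral.integral_sub (hc.intervalIntegrable x y)
      ((hρcont.intervalIntegrable x y).const_mul x), intervalIntegral.integral_const_mul]
  rw [convSmooth_eq hρcont hρpos hρint hρmom x, convSmooth_eq hρcont hρpos hρint hρmom y, hR]
  linear_combination hH - x * hG

lemma psi_nonneg (hρpos : ∀ s, 0 ≤ ρ s) (x y : ℝ) :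
    0 ≤ ∫ s in x..y, (s - x) * ρ s := by
  rcases le_total x y with h | h
  · exact intervalIntegral.integral_nonneg h fun u hu => mul_nonneg (by linarith [hu.1]) (hρpos u)
  · have h1 : 0 ≤ ∫ s in y..x, (x - s) * ρ s :=
      intervalIntegral.integral_nonneg h fun u hu => mul_nonneg (by linarith [hu.2]) (hρpos u)
    have h2 : ∫ s in x..y, (s - x) * ρ s = ∫ s in y..x, (x - s) * ρ s := by
      rw [intervalIntegral.integral_symm, ← intervalIntegral.integral_neg]
      apply intervalIntegral.integral_congr
      intro u _
      ring
    linarith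

lemma zero_of_cdf_eq_le (hρpos : ∀ s, 0 ≤ ρ s) (hρint : ∫ s, ρ s = 1) {u v : ℝ} (c : ℝ)
    (huv : u ≤ v) (h : (∫ s in Iic u, ρ s) = ∫ s in Iic v, ρ s) :
    ∫ s in u..v, (s - c) * ρ s = 0 := by
  have hIρ := rho_integrable hρint
  have h0 : ∫ s in Ioc u v, ρ s = 0 := by
    rw [← intervalIntegral.integral_of_le huv,
      ← intervalIntegral.integral_Iic_sub_Iic hIρ.integrableOn hIρ.integrableOn, h, sub_self]
  have hae : ρ =ᵐ[volume.restrict (Ioc u v)] 0 :=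
    (integral_eq_zero_iff_of_nonneg (fun s => hρpos s) hIρ.restrict).mp h0
  rw [intervalIntegral.integral_of_le huv]
  calc ∫ s in Ioc u v, (s - c) * ρ s = ∫ s in Ioc u v, (0:ℝ) := by
        apply integral_congr_ae
        filter_upwards [hae] with s hs
        simp [hs]
    _ = 0 := by simp

lemma zero_of_cdf_eq (hρpos : ∀ s, 0 ≤ ρ s) (hρint : ∫ s, ρ s = 1) (u v c : ℝ)
    (h : (∫ s in Iic u, ρ s) = ∫ s in Iic v, ρ s) :
    ∫ s in u..v, (s - c) * ρ s = 0 := by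
  rcases le_total u v with huv | hvu
  · exact zero_of_cdf_eq_le hρpos hρint c huv h
  · rw [intervalIntegral.integral_symm, zero_of_cdf_eq_le hρpos hρint c hvu h.symm, neg_zero]

lemma cdf_hasDerivAt (hρcont : Continuous ρ) (hρint : ∫ s, ρ s = 1) (η : ℝ) :
    HasDerivAt (fun x => ∫ s in Iic x, ρ s) (ρ η) η := by
  have hIρ := rho_integrable hρint
  have h1 : (fun x : ℝ => ∫ s in Iic x, ρ s)
      = fun x => (∫ s in Iic (0:ℝ), ρ s) + ∫ s in (0:ℝ)..x, ρ s := by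
    funext x
    rw [← intervalIntegral.integral_Iic_sub_Iic hIρ.integrableOn hIρ.integrableOn]
    ring
  rw [h1]
  exact (intervalIntegral.integral_hasDerivAt_right (hρcont.intervalIntegrable _ _)
    (hρcont.stronglyMeasurableAtFilter _ _) hρcont.continuousAt).const_add _

lemma scdf_hasDerivAt (hρcont : Continuous ρ) (hρpos : ∀ s, 0 ≤ ρ s)
    (hρmom : Integrable fun s => |s| * ρ s) (η : ℝ) :
    HasDerivAt (fun x => ∫ s in Iic x, s * ρ s) (η * ρ η) η := by
  have hIsρ := srho_integrable hρcont hρpos hρmom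
  have hc : Continuous fun s : ℝ => s * ρ s := continuous_id.mul hρcont
  have h1 : (fun x : ℝ => ∫ s in Iic x, s * ρ s)
      = fun x => (∫ s in Iic (0:ℝ), s * ρ s) + ∫ s in (0:ℝ)..x, s * ρ s := by
    funext x
    rw [← intervalIntegral.integral_Iic_sub_Iic hIsρ.integrableOn hIsρ.integrableOn]
    ring
  rw [h1]
  exact (intervalIntegral.integral_hasDerivAt_right (hc.intervalIntegrable _ _)
    (hc.stronglyMeasurableAtFilter _ _) hc.continuousAt).const_add _

lemma convSmooth_hasDerivAt (hρcont : Continuous ρ) (hρpos : ∀ s, 0 ≤ ρ s)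
    (hρint : ∫ s, ρ s = 1) (hρmom : Integrable fun s => |s| * ρ s) (η : ℝ) :
    HasDerivAt (convSmooth ρ) (∫ s in Iic η, ρ s) η := by
  have h1 : convSmooth ρ = fun x => x * (∫ s in Iic x, ρ s) - ∫ s in Iic x, s * ρ s :=
    funext (convSmooth_eq hρcont hρpos hρint hρmom)
  rw [h1]
  have h2 := ((hasDerivAt_id η).mul (cdf_hasDerivAt hρcont hρint η)).sub
    (scdf_hasDerivAt hρcont hρpos hρmom η)
  exact h2.congr_deriv (by simp)

end Aux

/-- with `ρ` a continuous probability density with finite first absolute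
moment and quantile function `Q`, the convolution smoothing `m̄₁` of `max{·,0}` is
convex, differentiable with derivative the CDF of `ρ`, its conjugate on `(0,1)` is
`d̄(t) = t·Q(t) − m̄₁(Q(t))` (attained at `η = Q(t)`), and consequently
`m̄₁(η) = sup_{t} { η t − d̄(t) }`: convolution smoothing is an
infimal-convolution smoothing. -/
theorem convolution_smoothing_is_infconv (ρ : ℝ → ℝ) (hρcont : Continuous ρ)
    (hρpos : ∀ s, 0 ≤ ρ s) (hρint : ∫ s, ρ s = 1)
    (hρmom : Integrable fun s => |s| * ρ s)
    (Q : ℝ → ℝ) (hQ : ∀ t ∈ Set.Ioo (0 : ℝ) 1, ∫ s in Set.Iic (Q t), ρ s = t) :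
    ConvexOn ℝ Set.univ (convSmooth ρ) ∧
    (∀ η : ℝ, HasDerivAt (convSmooth ρ) (∫ s in Set.Iic η, ρ s) η) ∧
    (∀ t ∈ Set.Ioo (0 : ℝ) 1,
      IsGreatest {z : ℝ | ∃ η : ℝ, z = η * t - convSmooth ρ η}
        (t * Q t - convSmooth ρ (Q t))) ∧
    (∀ η : ℝ, convSmooth ρ η =
      sSup {z : ℝ | ∃ t ∈ Set.Ioo (0 : ℝ) 1,
        z = η * t - (t * Q t - convSmooth ρ (Q t))}) := by
  have hIρ := rho_integrable hρint
  have key := key_identity hρcont hρpos hρint hρmom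
  have keyineq : ∀ x y : ℝ,
      x * (∫ s in Iic y, ρ s) - (y * (∫ s in Iic y, ρ s) - convSmooth ρ y) ≤ convSmooth ρ x := by
    intro x y
    have h := key x y
    have h2 := psi_nonneg hρpos x y
    linarith
  have hGder := cdf_hasDerivAt hρcont hρint
  have hGcont : Continuous fun x : ℝ => ∫ s in Iic x, ρ s :=
    continuous_iff_continuousAt.mpr fun x => (hGder x).continuousAt
  have hGmono : Monotone fun x : ℝ => ∫ s in Iic x, ρ s := by
    intro a b hab
    exact setIntegral_mono_set hIρ.integrableOn
      (Filter.Eventually.of_forall fun s => hρpos s)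
      (HasSubset.Subset.eventuallyLE (Iic_subset_Iic.mpr hab))
  have hGnonneg : ∀ x : ℝ, 0 ≤ ∫ s in Iic x, ρ s := fun x =>
    setIntegral_nonneg measurableSet_Iic fun s _ => hρpos s
  have hGle1 : ∀ x : ℝ, (∫ s in Iic x, ρ s) ≤ 1 := by
    intro x
    rw [← hρint]
    exact setIntegral_le_integral hIρ (Filter.Eventually.of_forall fun s => hρpos s)
  refine ⟨?_, convSmooth_hasDerivAt hρcont hρpos hρint hρmom, ?_, ?_⟩
  · -- convexity
    refine ⟨convex_univ, ?_⟩
    intro x _ y _ a b ha hb hab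
    obtain rfl : b = 1 - a := by linarith
    simp only [smul_eq_mul]
    have px := keyineq x (a * x + (1 - a) * y)
    have py := keyineq y (a * x + (1 - a) * y)
    have hx := mul_le_mul_of_nonneg_left px ha
    have hy := mul_le_mul_of_nonneg_left py (by linarith : (0:ℝ) ≤ 1 - a)
    nlinarith [hx, hy]
  · -- IsGreatest
    intro t ht
    have hQt := hQ t ht
    constructor
    · exact ⟨Q t, by ring⟩
    · rintro z ⟨η, rfl⟩
      have h := keyineq η (Q t)
      rw [hQt] at h
      linarith [h, mul_comm t (Q t)]
  · -- sSup
    intro η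
    set S := {z : ℝ | ∃ t ∈ Ioo (0:ℝ) 1, z = η * t - (t * Q t - convSmooth ρ (Q t))} with hS
    have hub : ∀ z ∈ S, z ≤ convSmooth ρ η := by
      rintro z ⟨t, ht, rfl⟩
      have h := keyineq η (Q t)
      rw [hQ t ht] at h
      linarith [h, mul_comm t (Q t)]
    have hbddS : BddAbove S := ⟨convSmooth ρ η, hub⟩
    have hne : S.Nonempty :=
      ⟨η * (1/2) - ((1/2) * Q (1/2) - convSmooth ρ (Q (1/2))), 1/2, by norm_num, rfl⟩
    have hIc : ∀ u v : ℝ, IntervalIntegrable (fun s => (s - η) * ρ s) volume u v :=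
      fun u v => ((continuous_id.sub continuous_const).mul hρcont).intervalIntegrable u v
    have hψcont : Continuous fun x : ℝ => ∫ s in η..x, (s - η) * ρ s := by
      have hc : Continuous fun s : ℝ => (s - η) * ρ s :=
        (continuous_id.sub continuous_const).mul hρcont
      refine continuous_iff_continuousAt.mpr fun x => ?_
      exact (intervalIntegral.integral_hasDerivAt_right (hc.intervalIntegrable _ _)
        (hc.stronglyMeasurableAtFilter _ _) hc.continuousAt).continuousAt
    have hsplit : ∀ x y : ℝ, (∫ s in η..y, (s - η) * ρ s)
        = (∫ s in η..x, (s - η) * ρ s) + ∫ s in x..y, (s - η) * ρ s := fun x y =>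
      (intervalIntegral.integral_add_adjacent_intervals (hIc η x) (hIc x y)).symm
    have claim : ∀ ε : ℝ, 0 < ε →
        ∃ t ∈ Ioo (0:ℝ) 1, (∫ s in η..(Q t), (s - η) * ρ s) < ε := by
      intro ε hε
      have main : ∀ x : ℝ, (∫ s in Iic x, ρ s) ∈ Ioo (0:ℝ) 1 →
          (∫ s in η..x, (s - η) * ρ s) < ε →
          ∃ t ∈ Ioo (0:ℝ) 1, (∫ s in η..(Q t), (s - η) * ρ s) < ε := by
        intro x hx hψx
        refine ⟨∫ s in Iic x, ρ s, hx, ?_⟩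
        have hzero : ∫ s in x..(Q (∫ s in Iic x, ρ s)), (s - η) * ρ s = 0 :=
          zero_of_cdf_eq hρpos hρint _ _ _ (by rw [hQ _ hx])
        rw [hsplit x (Q (∫ s in Iic x, ρ s)), hzero, add_zero]
        exact hψx
      rcases lt_or_eq_of_le (hGnonneg η) with h0 | h0
      · rcases lt_or_eq_of_le (hGle1 η) with h1 | h1
        · -- interior case
          refine main η ⟨h0, h1⟩ ?_
          rw [intervalIntegral.integral_same]
          exact hε
        · -- G η = 1 case
          have hexM : ∃ M : ℝ, (∫ s in Iic M, ρ s) < 1 := by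
            by_contra h
            push_neg at h
            have hall : ∀ x : ℝ, (∫ s in Iic x, ρ s) = 1 :=
              fun x => le_antisymm (hGle1 x) (h x)
            have hρ0 : ∀ x, ρ x = 0 := by
              intro x
              have hd := hGder x
              rw [funext hall] at hd
              exact hd.unique (hasDerivAt_const x 1)
            have hint0 : ∫ s, ρ s = 0 := by simp [hρ0]
            linarith
          obtain ⟨M, hM⟩ := hexM
          set S1 := {x : ℝ | (∫ s in Iic x, ρ s) = 1} with hS1
          have hS1closed : IsClosed S1 := isClosed_eq hGcont continuous_const
          have hηS1 : η ∈ S1 := h1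
          have hbdd1 : BddBelow S1 := by
            refine ⟨M, fun x hx => ?_⟩
            by_contra hxM
            push_neg at hxM
            have h2 : (∫ s in Iic x, ρ s) ≤ ∫ s in Iic M, ρ s := hGmono hxM.le
            rw [show (∫ s in Iic x, ρ s) = 1 from hx] at h2
            linarith
          set B := sInf S1 with hB
          have hBmem : B ∈ S1 := hS1closed.csInf_mem ⟨η, hηS1⟩ hbdd1
          have hBη : B ≤ η := csInf_le hbdd1 hηS1
          have hψB : (∫ s in η..B, (s - η) * ρ s) = 0 :=
            zero_of_cdf_eq hρpos hρint η B η (h1.trans hBmem.symm)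
          have hU : IsOpen {x : ℝ | 0 < (∫ s in Iic x, ρ s)
              ∧ (∫ s in η..x, (s - η) * ρ s) < ε} :=
            (isOpen_lt continuous_const hGcont).inter (isOpen_lt hψcont continuous_const)
          have hBU : B ∈ {x : ℝ | 0 < (∫ s in Iic x, ρ s)
              ∧ (∫ s in η..x, (s - η) * ρ s) < ε} := by
            constructor
            · rw [show (∫ s in Iic B, ρ s) = 1 from hBmem]; norm_num
            · rw [hψB]; exact hε
          obtain ⟨δ, hδ, hball⟩ := Metric.isOpen_iff.mp hU B hBU
          have hxball : B - δ/2 ∈ Metric.ball B δ := by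
            rw [Metric.mem_ball, Real.dist_eq, show B - δ/2 - B = -(δ/2) by ring, abs_neg,
              abs_of_pos (by linarith)]
            linarith
          obtain ⟨hx1, hx2⟩ := hball hxball
          have hxlt1 : (∫ s in Iic (B - δ/2), ρ s) < 1 := by
            rcases lt_or_eq_of_le (hGle1 (B - δ/2)) with h | h
            · exact h
            · exfalso
              have hmem : B - δ/2 ∈ S1 := h
              have := csInf_le hbdd1 hmem
              rw [← hB] at this
              linarith
          exact main (B - δ/2) ⟨hx1, hxlt1⟩ hx2
      · -- G η = 0 case
        have hexN : ∃ N : ℝ, 0 < ∫ s in Iic N, ρ s := by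
          by_contra h
          push_neg at h
          have hall : ∀ x : ℝ, (∫ s in Iic x, ρ s) = 0 :=
            fun x => le_antisymm (h x) (hGnonneg x)
          have hρ0 : ∀ x, ρ x = 0 := by
            intro x
            have hd := hGder x
            rw [funext hall] at hd
            exact hd.unique (hasDerivAt_const x 0)
          have hint0 : ∫ s, ρ s = 0 := by simp [hρ0]
          linarith
        obtain ⟨N, hN⟩ := hexN
        set S0 := {x : ℝ | (∫ s in Iic x, ρ s) = 0} with hS0
        have hS0closed : IsClosed S0 := isClosed_eq hGcont continuous_const
        have hηS0 : η ∈ S0 := h0.symm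
        have hbdd0 : BddAbove S0 := by
          refine ⟨N, fun x hx => ?_⟩
          by_contra hxN
          push_neg at hxN
          have h2 : (∫ s in Iic N, ρ s) ≤ ∫ s in Iic x, ρ s := hGmono hxN.le
          rw [show (∫ s in Iic x, ρ s) = 0 from hx] at h2
          linarith
        set A := sSup S0 with hA
        have hAmem : A ∈ S0 := hS0closed.csSup_mem ⟨η, hηS0⟩ hbdd0
        have hηA : η ≤ A := le_csSup hbdd0 hηS0
        have hψA : (∫ s in η..A, (s - η) * ρ s) = 0 :=
          zero_of_cdf_eq hρpos hρint η A η (h0.symm.trans hAmem.symm)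
        have hU : IsOpen {x : ℝ | (∫ s in Iic x, ρ s) < 1
            ∧ (∫ s in η..x, (s - η) * ρ s) < ε} :=
          (isOpen_lt hGcont continuous_const).inter (isOpen_lt hψcont continuous_const)
        have hAU : A ∈ {x : ℝ | (∫ s in Iic x, ρ s) < 1
            ∧ (∫ s in η..x, (s - η) * ρ s) < ε} := by
          constructor
          · rw [show (∫ s in Iic A, ρ s) = 0 from hAmem]; norm_num
          · rw [hψA]; exact hε
        obtain ⟨δ, hδ, hball⟩ := Metric.isOpen_iff.mp hU A hAU
        have hxball : A + δ/2 ∈ Metric.ball A δ := by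
          rw [Metric.mem_ball, Real.dist_eq, show A + δ/2 - A = δ/2 by ring,
            abs_of_pos (by linarith)]
          linarith
        obtain ⟨hx1, hx2⟩ := hball hxball
        have hxpos : 0 < ∫ s in Iic (A + δ/2), ρ s := by
          rcases lt_or_eq_of_le (hGnonneg (A + δ/2)) with h | h
          · exact h
          · exfalso
            have hmem : A + δ/2 ∈ S0 := h.symm
            have := le_csSup hbdd0 hmem
            rw [← hA] at this
            linarith
        exact main (A + δ/2) ⟨hxpos, hx1⟩ hx2
    refine le_antisymm ?_ (csSup_le hne hub)
    by_contra hc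
    push_neg at hc
    obtain ⟨t, ht, hψ⟩ := claim (convSmooth ρ η - sSup S) (by linarith)
    have hz : η * t - (t * Q t - convSmooth ρ (Q t)) ∈ S := ⟨t, ht, rfl⟩
    have h1 := le_csSup hbddS hz
    have h2 := key η (Q t)
    rw [hQ t ht] at h2
    linarith [h1, h2, hψ, mul_comm t (Q t)]
end

section
/- Let m : ℝ → ℝ be convex with Lipschitz, nondecreasing derivative m' satisfying m'(η) → 0 as η → −∞ and m'(η) → 1 as η → +∞, and m bounded below. Then m admits a finite limit m(−∞) at −∞, s·m'(s) → 0 as s → −∞, and m(η) = m(−∞) + ∫_{−∞}^{η} (η − s) m''(s) ds, where m'' exists almost everywhere and ∫_ℝ m''(s) ds = 1. -/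
open MeasureTheory Filter
open scoped ENNReal NNReal

/-- every infimal-convolution smoothing of the positive part is a
convolution smoothing. If `m` is convex, bounded below, with Lipschitz nondecreasing
derivative `m'` satisfying `m'(η) → 0` at `−∞` and `m'(η) → 1` at `+∞`, then `m` has a
finite limit `c` at `−∞`, `s·m'(s) → 0` as `s → −∞`, `m''` exists a.e. with
`∫ m'' = 1`, and `m(η) = c + ∫_{−∞}^η (η − s) m''(s) ds`. -/
theorem infconv_smoothing_is_convolution (mfun md : ℝ → ℝ)
    (hconv : ConvexOn ℝ Set.univ mfun)
    (hderiv : ∀ η, HasDerivAt mfun (md η) η)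
    (K : NNReal) (hlip : LipschitzWith K md) (hmono : Monotone md)
    (h0 : Tendsto md atBot (nhds 0)) (h1 : Tendsto md atTop (nhds 1))
    (hbdd : BddBelow (Set.range mfun)) :
    ∃ (c : ℝ) (ρ : ℝ → ℝ),
      Tendsto mfun atBot (nhds c) ∧
      Tendsto (fun s => s * md s) atBot (nhds 0) ∧
      (∀ᵐ s ∂(volume : Measure ℝ), HasDerivAt md (ρ s) s) ∧
      (∀ᵐ s ∂(volume : Measure ℝ), 0 ≤ ρ s) ∧
      (∫ s, ρ s) = 1 ∧
      ∀ η : ℝ, mfun η = c + ∫ s in Set.Iic η, (η - s) * ρ s := by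
  classical
  have hcont : Continuous md := hlip.continuous
  -- md is nonnegative
  have hmd0 : ∀ x, 0 ≤ md x := by
    intro x
    refine le_of_tendsto h0 ?_
    filter_upwards [eventually_le_atBot x] with a ha using hmono ha
  -- fundamental theorem of calculus for mfun
  have hftc : ∀ a b : ℝ, ∫ t in a..b, md t = mfun b - mfun a := fun a b =>
    intervalIntegral.integral_eq_sub_of_hasDerivAt (fun x _ => hderiv x)
      (hcont.intervalIntegrable a b)
  -- mfun is monotone
  have hmfun_mono : Monotone mfun := by
    intro a b hab
    have h1' : (0:ℝ) ≤ ∫ t in a..b, md t :=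
      intervalIntegral.integral_nonneg hab fun u _ => hmd0 u
    rw [hftc a b] at h1'
    linarith
  set c := ⨅ x, mfun x with hcdef
  have hlim : Tendsto mfun atBot (nhds c) := tendsto_atBot_ciInf hmfun_mono hbdd
  -- s * md s → 0 at -∞
  have hsmd : Tendsto (fun s => s * md s) atBot (nhds 0) := by
    have hhalf : Tendsto (fun s : ℝ => s / 2) atBot atBot :=
      tendsto_id.atBot_div_const (by norm_num)
    have hA : Tendsto (fun s : ℝ => 2 * (mfun s - mfun (s / 2))) atBot (nhds 0) := by
      have := ((hlim.sub (hlim.comp hhalf)).const_mul (2:ℝ))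
      simpa using this
    refine tendsto_of_tendsto_of_tendsto_of_le_of_le' hA tendsto_const_nhds ?_ ?_
    · filter_upwards [eventually_le_atBot (0:ℝ)] with s hs
      have hle : s ≤ s / 2 := by linarith
      have hmono' : ∫ t in s..(s/2), md s ≤ ∫ t in s..(s/2), md t := by
        refine intervalIntegral.integral_mono_on hle
          (intervalIntegrable_const) (hcont.intervalIntegrable _ _) ?_
        intro x hx
        exact hmono hx.1
      rw [intervalIntegral.integral_const, hftc] at hmono'
      simp only [smul_eq_mul] at hmono'
      nlinarith
    · filter_upwards [eventually_le_atBot (0:ℝ)] with s hs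
      exact mul_nonpos_of_nonpos_of_nonneg hs (hmd0 s)
  -- Stieltjes function of md
  set S : StieltjesFunction ℝ := ⟨md, hmono, fun x => hcont.continuousWithinAt⟩ with hSdef
  set μ : Measure ℝ := S.measure with hμdef
  have huniv : μ Set.univ = 1 := by
    rw [hμdef, S.measure_univ h0 h1]
    norm_num
  haveI : IsFiniteMeasure μ := ⟨by rw [huniv]; exact ENNReal.one_lt_top⟩
  -- absolute continuity via the Lipschitz bound
  set K' : NNReal := K + 1 with hK'def
  have hK' : LipschitzWith K' md := hlip.weaken le_self_add
  have hgm : Monotone (fun x : ℝ => (K' : ℝ) * x - md x) := by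
    intro a b hab
    have h2 := hK'.dist_le_mul a b
    rw [Real.dist_eq, Real.dist_eq] at h2
    have h3 : md b - md a ≤ |md a - md b| := by
      rw [abs_sub_comm]; exact le_abs_self _
    have h4 : |a - b| = b - a := by
      rw [abs_sub_comm]; exact abs_of_nonneg (by linarith)
    rw [h4] at h2
    have := h3.trans h2
    simp only
    nlinarith
  set T : StieltjesFunction ℝ :=
    ⟨fun x => (K' : ℝ) * x - md x, hgm,
      fun x => ((continuous_const.mul continuous_id).sub hcont).continuousWithinAt⟩ with hTdef
  haveI : IsLocallyFiniteMeasure (μ + T.measure) := by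
    refine ⟨fun x => ?_⟩
    obtain ⟨U, hU, hfin⟩ := T.measure.finiteAt_nhds x
    refine ⟨U, hU, ?_⟩
    simp only [Measure.coe_add, Pi.add_apply]
    exact ENNReal.add_lt_top.2 ⟨measure_lt_top μ U, hfin⟩
  have hagree : μ + T.measure = ((K' : ℝ≥0∞)) • volume := by
    refine Measure.ext_of_Ioc (μ + T.measure) _ fun a b hab => ?_
    have h5 : μ (Set.Ioc a b) = ENNReal.ofReal (md b - md a) := S.measure_Ioc a b
    have h6 : T.measure (Set.Ioc a b)
        = ENNReal.ofReal (((K' : ℝ) * b - md b) - ((K' : ℝ) * a - md a)) := T.measure_Ioc a b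
    rw [Measure.add_apply, h5, h6, ← ENNReal.ofReal_add
      (sub_nonneg.2 (hmono hab.le)) (sub_nonneg.2 (hgm hab.le))]
    rw [Measure.smul_apply, Real.volume_Ioc, smul_eq_mul,
      ← ENNReal.ofReal_coe_nnreal, ← ENNReal.ofReal_mul K'.coe_nonneg]
    congr 1
    ring
  have hac : μ ≪ volume := by
    intro s hs
    have h7 : μ s ≤ (μ + T.measure) s := by
      rw [Measure.add_apply]; exact le_self_add
    rw [hagree, Measure.smul_apply, hs, smul_eq_mul, mul_zero] at h7
    exact le_antisymm h7 bot_le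
  set D : ℝ → ℝ≥0∞ := μ.rnDeriv volume with hDdef
  have hDm : Measurable D := Measure.measurable_rnDeriv μ volume
  refine ⟨c, fun s => (D s).toReal, hlim, hsmd, ?_, ?_, ?_, ?_⟩
  · exact S.ae_hasDerivAt
  · exact Eventually.of_forall fun s => ENNReal.toReal_nonneg
  · have := Measure.integral_toReal_rnDeriv hac
    rw [measureReal_def, huniv] at this
    simpa using this
  · intro η
    -- md is integrable on Iic η with integral mfun η - c
    have htend : Tendsto (fun a => ∫ t in a..η, md t) atBot (nhds (mfun η - c)) := by
      have : Tendsto (fun a => mfun η - mfun a) atBot (nhds (mfun η - c)) :=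
        tendsto_const_nhds.sub hlim
      refine this.congr fun a => (hftc a η).symm
    have hnormeq : ∀ a : ℝ, (∫ t in a..η, ‖md t‖) = ∫ t in a..η, md t := by
      intro a
      refine intervalIntegral.integral_congr fun t _ => Real.norm_of_nonneg (hmd0 t)
    have hInt : IntegrableOn md (Set.Iic η) := by
      refine integrableOn_Iic_of_intervalIntegral_norm_tendsto (mfun η - c) η
        (fun a => hcont.integrableOn_Ioc) tendsto_id ?_
      exact htend.congr fun a => (hnormeq a).symm
    have hIicval : ∫ t in Set.Iic η, md t = mfun η - c :=
      tendsto_nhds_unique (intervalIntegral_tendsto_integral_Iic η hInt tendsto_id) htend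
    have hcle : c ≤ mfun η := ciInf_le hbdd η
    -- lintegral of md over Iic η
    have L1 : ∫⁻ t in Set.Iic η, ENNReal.ofReal (md t) = ENNReal.ofReal (mfun η - c) := by
      rw [← hIicval]
      exact (ofReal_integral_eq_lintegral_ofReal hInt
        (Eventually.of_forall fun t => hmd0 t)).symm
    -- Tonelli argument
    set F : ℝ × ℝ → ℝ≥0∞ :=
      Set.indicator {p : ℝ × ℝ | p.1 ≤ p.2 ∧ p.2 < η} (fun p => D p.1) with hFdef
    have hFm : Measurable F := by
      refine Measurable.indicator (hDm.comp measurable_fst) ?_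
      exact (measurableSet_le measurable_fst measurable_snd).inter
        (measurableSet_lt measurable_snd measurable_const)
    have key : ∫⁻ s in Set.Iic η, ENNReal.ofReal (η - s) * D s
        = ∫⁻ t in Set.Iic η, ENNReal.ofReal (md t) := by
      have step1 : ∫⁻ s in Set.Iic η, ENNReal.ofReal (η - s) * D s
          = ∫⁻ s in Set.Iic η, ∫⁻ t, F (s, t) := by
        refine setLIntegral_congr_fun measurableSet_Iic (fun s hs => ?_)
        have hFe : (fun t => F (s, t)) = (Set.Ico s η).indicator (fun _ => D s) := by
          funext t
          simp only [hFdef, Set.indicator_apply, Set.mem_setOf_eq, Set.mem_Ico]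
        rw [hFe, lintegral_indicator measurableSet_Ico, setLIntegral_const,
          Real.volume_Ico, mul_comm]
      have step2 : ∫⁻ s in Set.Iic η, ∫⁻ t, F (s, t)
          = ∫⁻ t, ∫⁻ s in Set.Iic η, F (s, t) := by
        exact lintegral_lintegral_swap (hFm.aemeasurable.comp_measurable
          (measurable_fst.prodMk measurable_snd))
      have step3 : ∀ t : ℝ, (∫⁻ s in Set.Iic η, F (s, t))
          = Set.indicator (Set.Iio η) (fun t => ENNReal.ofReal (md t)) t := by
        intro t
        by_cases ht : t < η
        · have hFe : (fun s => F (s, t)) = (Set.Iic t).indicator D := by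
            funext s
            simp only [hFdef, Set.indicator_apply, Set.mem_setOf_eq, Set.mem_Iic, ht,
              and_true]
          rw [hFe, lintegral_indicator measurableSet_Iic,
            Measure.restrict_restrict measurableSet_Iic]
          have hinter : Set.Iic t ∩ Set.Iic η = Set.Iic t := by
            rw [Set.Iic_inter_Iic, min_eq_left ht.le]
          rw [hinter, Measure.setLIntegral_rnDeriv hac]
          have := S.measure_Iic h0 t
          rw [hμdef, this, Set.indicator_of_mem (Set.mem_Iio.2 ht)]
          norm_num
          rfl
        · have hFe : (fun s => F (s, t)) = fun _ => (0 : ℝ≥0∞) := by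
            funext s
            simp only [hFdef, Set.indicator_apply, Set.mem_setOf_eq, ht, and_false, if_false]
          rw [hFe, lintegral_const, zero_mul,
            Set.indicator_of_notMem (by simpa using ht)]
      have step4 : ∫⁻ t, Set.indicator (Set.Iio η) (fun t => ENNReal.ofReal (md t)) t
          = ∫⁻ t in Set.Iic η, ENNReal.ofReal (md t) := by
        rw [lintegral_indicator measurableSet_Iio,
          Measure.restrict_congr_set Iio_ae_eq_Iic]
      rw [step1, step2]
      simp_rw [step3]
      exact step4
    -- convert the real integral to the lintegral
    have hDft : ∀ᵐ s ∂(volume : Measure ℝ), D s < ⊤ := Measure.rnDeriv_lt_top μ volume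
    have hreal : ∫ s in Set.Iic η, (η - s) * (D s).toReal
        = (∫⁻ s in Set.Iic η, ENNReal.ofReal (η - s) * D s).toReal := by
      rw [integral_eq_lintegral_of_nonneg_ae ?_ ?_]
      · congr 1
        refine lintegral_congr_ae ?_
        filter_upwards [ae_restrict_mem measurableSet_Iic,
          ae_restrict_of_ae hDft] with s hs hD
        rw [ENNReal.ofReal_mul (by simp only [Set.mem_Iic] at hs; linarith),
          ENNReal.ofReal_toReal hD.ne]
      · filter_upwards [ae_restrict_mem measurableSet_Iic] with s hs
        simp only [Set.mem_Iic] at hs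
        exact mul_nonneg (by linarith) ENNReal.toReal_nonneg
      · exact ((measurable_const.sub measurable_id).mul
          hDm.ennreal_toReal).aestronglyMeasurable
    rw [hreal, key, L1, ENNReal.toReal_ofReal (by linarith)]
    ring
end
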